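/- arXiv:1507.04985 — 6 statements merged into one kernel-verified Lean document; each statement's English description precedes it below -/
import Mathlib

section
/- Let $n > r > k \ge 2$, let $1/n < \delta < 1$, and let $G$ be a $k$-uniform hypergraph on $n$ vertices with $\delta_{k-1}(G) \ge (1-\delta)n$. Then for any edge $e \in E(G)$, the number $\kappa_e^{(r)}$ of copies of $K_r^{(k)}$ containing $e$ satisfies $k_{r-k} - \frac{2k\delta n^{r-k}}{(r-k)!}\binom{r}{k-1} \le \kappa_e^{(r)} \le k_{r-k}$, where $k_{r-k}$ is the number of copies of $K_{r-k}^{(k)}$ in $G$ (interpreted as $\binom{n}{r-k}$ if $r-k < k$). -/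
/-!
Deleting `e` maps the `r`-cliques through `e` injectively to `(r-k)`-cliques. Conversely, an
`(r-k)`-clique `B` fails to come from an `r`-clique `B ∪ e` only if `B` meets `e`, or `B ∪ e`
contains a non-edge `f = T ∪ U` with `∅ ≠ T = f ∩ e ≠ e` and `U = f \ e ⊆ B`. By the codegree
condition every `(k-1)`-set has at most `δn` non-neighbours, so double counting the pairs
`(U, u ∈ U)` shows that a fixed trace `T` admits at most `δ n^t / t!` such `U`, `t = k - |T|`,
and each `U` lies in at most `(r-k)_t n^{r-k-t} / (r-k)!` sets `B`. Summing over `T`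
(Vandermonde) bounds the second kind of `B` by `k C(r, k-1) δ n^{r-k} / (r-k)!`, and the `k`
vertices of `e` bound the first kind by `k (r-k) n^{r-k-1} / (r-k)! ≤ k (r-k) δ n^{r-k} / (r-k)!`.
-/

namespace Nat

lemma choose_add_le_choose_add_mul (m k : ℕ) :
    ∀ j, (m + j).choose (k + 1) ≤ m.choose (k + 1) + j * (m + j).choose k
  | 0 => by simp
  | j + 1 => by
    have ih := choose_add_le_choose_add_mul m k j
    have hmono : (m + j).choose k ≤ (m + (j + 1)).choose k := choose_le_choose k (by omega)
    rw [← add_assoc, choose_succ_succ', add_assoc]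
    nlinarith

lemma sub_le_choose_sub_one {k r : ℕ} (hk : 2 ≤ k) (hkr : k ≤ r) : r - k ≤ r.choose (k - 1) :=
  calc r - k ≤ (r - k + 2).choose (r - k + 1) := by rw [choose_succ_self_right]; omega
    _ ≤ r.choose (r - k + 1) := choose_le_choose _ (by omega)
    _ = r.choose (k - 1) := choose_symm_of_eq_add (by omega)

end Nat

namespace Finset

lemma sum_powerset_choose_card_sub {α : Type*} (A : Finset α) (m : ℕ) :
    ∑ T ∈ A.powerset, m.choose (#A - #T) = (#A + m).choose #A := by
  rw [sum_powerset_apply_card (fun i => m.choose (#A - i)), Nat.add_choose_eq,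
    Nat.sum_antidiagonal_eq_sum_range_succ (fun i j => (#A).choose i * m.choose j)]
  rfl

lemma sum_choose_card_sub_le {α : Type*} [DecidableEq α] (A : Finset α) (m : ℕ) :
    ∑ T ∈ (A.powerset.erase ∅).erase A, m.choose (#A - #T) ≤ #A * (#A + m).choose (#A - 1) := by
  obtain hA | ⟨a, ha⟩ : #A = 0 ∨ ∃ a, #A = a + 1 := by rcases #A with _ | a <;> simp
  · simp [card_eq_zero.1 hA]
  have hsplit := add_sum_erase A.powerset (fun T => m.choose (#A - #T)) (empty_mem_powerset A)
  have hsub := sum_le_sum_of_subset (f := fun T => m.choose (#A - #T))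
    (erase_subset A (A.powerset.erase ∅))
  have htel := Nat.choose_add_le_choose_add_mul m a (a + 1)
  rw [sum_powerset_choose_card_sub, card_empty, Nat.sub_zero] at hsplit
  simp only [ha, Nat.add_sub_cancel, add_comm (a + 1) m] at hsplit hsub ⊢
  omega

end Finset

open Finset

section Hypergraph

variable {V : Type*} [Fintype V] [DecidableEq V]

def supersetsOfCard (U : Finset V) (m : ℕ) : Finset (Finset V) :=
  (univ.powersetCard m).filter (U ⊆ ·)

def nonNeighbors (H : Finset (Finset V)) (S : Finset V) : Finset V :=
  univ.filter (fun v => v ∉ S ∧ insert v S ∉ H)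

def nonEdgeCompletions (H : Finset (Finset V)) (T : Finset V) (t : ℕ) : Finset (Finset V) :=
  (univ.powersetCard t).filter (fun U => Disjoint U T ∧ T ∪ U ∉ H)

def cliques (H : Finset (Finset V)) (k m : ℕ) : Finset (Finset V) :=
  (univ.powersetCard m).filter (fun A => ∀ f ∈ A.powersetCard k, f ∈ H)

def cliquesThrough (H : Finset (Finset V)) (k r : ℕ) (e : Finset V) : Finset (Finset V) :=
  (univ.powersetCard r).filter (fun A => (∀ f ∈ A.powersetCard k, f ∈ H) ∧ e ⊆ A)

lemma card_supersetsOfCard_le_choose (U : Finset V) (m : ℕ) :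
    #(supersetsOfCard U m) ≤ (Fintype.card V).choose (m - #U) := by
  rw [← card_univ, ← card_powersetCard]
  refine card_le_card_of_injOn (· \ U) (fun B hB => ?_) (fun B hB B' hB' hBB' => ?_)
  · simp only [supersetsOfCard, mem_coe, mem_filter, mem_powersetCard_univ] at hB ⊢
    rw [card_sdiff_of_subset hB.2, hB.1]
  · simp only [supersetsOfCard, mem_coe, mem_filter, mem_powersetCard_univ] at hB hB'
    rw [← sdiff_union_of_subset hB.2, ← sdiff_union_of_subset hB'.2]
    exact congrArg (· ∪ U) hBB'

-- The factor `card V ^ #U` keeps the bound true when `#U > m`, where `m - #U` truncates to `0`.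
lemma card_supersetsOfCard_mul_le (U : Finset V) (m : ℕ) :
    #(supersetsOfCard U m) * m.factorial * Fintype.card V ^ #U
      ≤ m.descFactorial #U * Fintype.card V ^ m := by
  by_cases hUm : #U ≤ m
  · have hchoose := Nat.descFactorial_le_pow (Fintype.card V) (m - #U)
    rw [Nat.descFactorial_eq_factorial_mul_choose] at hchoose
    calc #(supersetsOfCard U m) * m.factorial * Fintype.card V ^ #U
        = #(supersetsOfCard U m) * (m - #U).factorial * m.descFactorial #U
            * Fintype.card V ^ #U := by
          rw [← Nat.factorial_mul_descFactorial hUm]; ring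
      _ ≤ Fintype.card V ^ (m - #U) * m.descFactorial #U * Fintype.card V ^ #U := by
          gcongr
          exact (Nat.mul_le_mul_right _ (card_supersetsOfCard_le_choose U m)).trans
            (by rwa [mul_comm])
      _ = m.descFactorial #U * Fintype.card V ^ m := by
          rw [mul_right_comm, ← pow_add, Nat.sub_add_cancel hUm, mul_comm]
  · have hempty : supersetsOfCard U m = ∅ := filter_eq_empty_iff.2 fun B hB hUB =>
      hUm ((card_le_card hUB).trans (mem_powersetCard_univ.1 hB).le)
    simp [hempty]

lemma sum_card_supersetsOfCard_singleton_le {e : Finset V} {k : ℕ} (hek : #e = k) (m : ℕ)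
    {δ : ℝ} (hδ : 1 ≤ δ * Fintype.card V) :
    (∑ x ∈ e, (#(supersetsOfCard {x} m) : ℝ)) * m.factorial ≤ k * m * (δ * Fintype.card V ^ m) := by
  have hδ0 : 0 ≤ δ := by
    by_contra! hneg
    nlinarith [(Nat.cast_nonneg _ : (0 : ℝ) ≤ Fintype.card V)]
  have hx (x : V) : (#(supersetsOfCard {x} m) : ℝ) * m.factorial ≤ m * (δ * Fintype.card V ^ m) := by
    have h : (#(supersetsOfCard {x} m) : ℝ) * m.factorial * Fintype.card V
        ≤ m * Fintype.card V ^ m := by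
      exact_mod_cast (by simpa using card_supersetsOfCard_mul_le {x} m)
    calc (#(supersetsOfCard {x} m) : ℝ) * m.factorial
        ≤ #(supersetsOfCard {x} m) * m.factorial * (δ * Fintype.card V) :=
          le_mul_of_one_le_right (by positivity) hδ
      _ ≤ m * (δ * Fintype.card V ^ m) := by
          linear_combination mul_le_mul_of_nonneg_left h hδ0
  rw [sum_mul]
  refine (sum_le_sum fun x _ => hx x).trans ?_
  rw [sum_const, hek, nsmul_eq_mul, mul_assoc]

lemma card_nonNeighbors_le {H : Finset (Finset V)} {S : Finset V} {δ : ℝ}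
    (hS : (1 - δ) * Fintype.card V ≤ #(univ.filter (fun v => v ∉ S ∧ insert v S ∈ H))) :
    (#(nonNeighbors H S) : ℝ) ≤ δ * Fintype.card V := by
  have hdisj : Disjoint (nonNeighbors H S) (univ.filter (fun v => v ∉ S ∧ insert v S ∈ H)) :=
    disjoint_filter.2 fun _ _ h h' => h.2 h'.2
  have hle : (#(nonNeighbors H S) + #(univ.filter (fun v => v ∉ S ∧ insert v S ∈ H)) : ℝ)
      ≤ Fintype.card V := by
    exact_mod_cast (card_union_of_disjoint hdisj).symm.trans_le (card_le_univ _)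
  linarith

variable {H : Finset (Finset V)}

-- Double counting pairs `(U, U')` with `U' ⊆ U` one element smaller.
lemma card_nonEdgeCompletions_mul_le {T : Finset V} {t : ℕ} (ht : 1 ≤ t) {D : ℝ}
    (hD : ∀ U' ∈ (univ.powersetCard (t - 1)).filter (Disjoint · T),
      (#(nonNeighbors H (T ∪ U')) : ℝ) ≤ D) :
    (#(nonEdgeCompletions H T t) : ℝ) * t
      ≤ #((univ.powersetCard (t - 1)).filter (Disjoint · T)) * D := by
  have := card_nsmul_le_card_nsmul (s := nonEdgeCompletions H T t)
    (t := (univ.powersetCard (t - 1)).filter (Disjoint · T)) (r := fun U U' => U' ⊆ U)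
    (m := (t : ℝ)) (n := D) ?_ ?_
  · simpa only [nsmul_eq_mul] using this
  · intro U hU
    simp only [nonEdgeCompletions, mem_filter, mem_powersetCard_univ] at hU
    have hsub : U.powersetCard (t - 1) ⊆ bipartiteAbove (fun U U' => U' ⊆ U)
        ((univ.powersetCard (t - 1)).filter (Disjoint · T)) U := by
      intro U' hU'
      rw [mem_powersetCard] at hU'
      simp only [mem_bipartiteAbove, mem_filter, mem_powersetCard_univ]
      exact ⟨⟨hU'.2, hU.2.1.mono_left hU'.1⟩, hU'.1⟩
    have hcard : #(U.powersetCard (t - 1)) = t := by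
      rw [card_powersetCard, hU.1, Nat.choose_symm ht, Nat.choose_one_right]
    exact_mod_cast hcard ▸ card_le_card hsub
  · intro U' hU'
    refine le_trans ?_ (hD U' hU')
    simp only [mem_filter, mem_powersetCard_univ] at hU'
    have hsub : bipartiteBelow (fun U U' => U' ⊆ U) (nonEdgeCompletions H T t) U'
        ⊆ (nonNeighbors H (T ∪ U')).image (insert · U') := by
      intro U hU
      simp only [mem_bipartiteBelow, nonEdgeCompletions, mem_filter, mem_powersetCard_univ] at hU
      obtain ⟨⟨hUt, hUT, hTU⟩, hU'U⟩ := hU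
      obtain ⟨v, hvU', rfl⟩ := exists_eq_insert_iff.2 ⟨hU'U, by omega⟩
      refine mem_image.2 ⟨v, ?_, rfl⟩
      simp only [nonNeighbors, mem_filter, mem_univ, true_and, mem_union, not_or]
      refine ⟨⟨disjoint_left.1 hUT (mem_insert_self v U'), hvU'⟩, ?_⟩
      rwa [← union_insert]
    exact_mod_cast (card_le_card hsub).trans card_image_le

lemma card_nonEdgeCompletions_mul_factorial_le {T : Finset V} {k t : ℕ}
    (ht : 1 ≤ t) (hT : #T + t = k) {D : ℝ} (hD : 0 ≤ D)
    (hmiss : ∀ S : Finset V, #S = k - 1 → (#(nonNeighbors H S) : ℝ) ≤ D) :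
    (#(nonEdgeCompletions H T t) : ℝ) * t.factorial ≤ D * Fintype.card V ^ (t - 1) := by
  set Y := (univ.powersetCard (t - 1)).filter (Disjoint · T)
  have hcompl := card_nonEdgeCompletions_mul_le (H := H) (T := T) ht (D := D) fun U' hU' => by
    simp only [mem_filter, mem_powersetCard_univ] at hU'
    exact hmiss _ (by rw [card_union_of_disjoint hU'.2.symm]; omega)
  have hY : #Y * (t - 1).factorial ≤ Fintype.card V ^ (t - 1) := by
    refine le_trans ?_ (Nat.descFactorial_le_pow _ _)
    rw [Nat.descFactorial_eq_factorial_mul_choose, mul_comm, ← card_univ, ← card_powersetCard]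
    exact Nat.mul_le_mul_left _ (card_filter_le _ _)
  rw [← Nat.mul_factorial_pred (by omega : t ≠ 0), Nat.cast_mul, ← mul_assoc]
  calc (#(nonEdgeCompletions H T t) : ℝ) * t * (t - 1).factorial
      ≤ #Y * D * (t - 1).factorial := by gcongr
    _ = D * (#Y * (t - 1).factorial : ℕ) := by push_cast; ring
    _ ≤ D * Fintype.card V ^ (t - 1) := by gcongr; exact_mod_cast hY

lemma sum_card_supersetsOfCard_nonEdgeCompletions_le {T : Finset V} {k t : ℕ}
    (ht : 1 ≤ t) (hT : #T + t = k) (hV : 0 < Fintype.card V) {δ : ℝ} (hδ : 0 ≤ δ)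
    (hmiss : ∀ S : Finset V, #S = k - 1 → (#(nonNeighbors H S) : ℝ) ≤ δ * Fintype.card V)
    (m : ℕ) :
    (∑ U ∈ nonEdgeCompletions H T t, #(supersetsOfCard U m) : ℝ) * m.factorial
      ≤ m.choose t * (δ * Fintype.card V ^ m) := by
  have hU : ∀ U ∈ nonEdgeCompletions H T t,
      (#(supersetsOfCard U m) : ℝ) * m.factorial * Fintype.card V ^ t
        ≤ m.descFactorial t * Fintype.card V ^ m := by
    intro U hU
    rw [← (mem_powersetCard_univ.1 (mem_filter.1 hU).1)]
    exact_mod_cast card_supersetsOfCard_mul_le U m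
  set N := (Fintype.card V : ℝ)
  have hX := card_nonEdgeCompletions_mul_factorial_le ht hT (by positivity) hmiss
  refine le_of_mul_le_mul_right ?_ (by positivity : 0 < N ^ t)
  calc (∑ U ∈ nonEdgeCompletions H T t, #(supersetsOfCard U m) : ℝ) * m.factorial * N ^ t
      ≤ ∑ U ∈ nonEdgeCompletions H T t, (m.descFactorial t * N ^ m : ℝ) := by
        rw [sum_mul, sum_mul]; exact sum_le_sum hU
    _ = (#(nonEdgeCompletions H T t) * t.factorial) * (m.choose t * N ^ m) := by
        rw [sum_const, nsmul_eq_mul, Nat.descFactorial_eq_factorial_mul_choose]; push_cast; ring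
    _ ≤ (δ * N * N ^ (t - 1)) * (m.choose t * N ^ m) := by gcongr
    _ = m.choose t * (δ * N ^ m) * N ^ t := by
        rw [mul_assoc δ, mul_pow_sub_one (by omega)]; ring

lemma sum_sum_card_supersetsOfCard_nonEdgeCompletions_le {e : Finset V} {k r : ℕ}
    (hek : #e = k) (hkr : k ≤ r) (hV : 0 < Fintype.card V) {δ : ℝ} (hδ : 0 ≤ δ)
    (hmiss : ∀ S : Finset V, #S = k - 1 → (#(nonNeighbors H S) : ℝ) ≤ δ * Fintype.card V) :
    (∑ T ∈ (e.powerset.erase ∅).erase e,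
        ∑ U ∈ nonEdgeCompletions H T (k - #T), (#(supersetsOfCard U (r - k)) : ℝ))
      * (r - k).factorial ≤ k * r.choose (k - 1) * (δ * Fintype.card V ^ (r - k)) :=
  calc _ = ∑ T ∈ (e.powerset.erase ∅).erase e,
        (∑ U ∈ nonEdgeCompletions H T (k - #T), (#(supersetsOfCard U (r - k)) : ℝ))
          * (r - k).factorial := sum_mul _ _ _
    _ ≤ ∑ T ∈ (e.powerset.erase ∅).erase e,
        ((r - k).choose (k - #T) : ℝ) * (δ * Fintype.card V ^ (r - k)) := by
      refine sum_le_sum fun T hT => ?_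
      simp only [mem_erase, mem_powerset] at hT
      have hTe : #T < k := hek ▸ card_lt_card (ssubset_of_subset_of_ne hT.2.2 hT.1)
      exact sum_card_supersetsOfCard_nonEdgeCompletions_le (by omega) (by omega) hV hδ hmiss _
    _ ≤ k * r.choose (k - 1) * (δ * Fintype.card V ^ (r - k)) := by
      rw [← sum_mul]
      gcongr
      have := sum_choose_card_sub_le e (r - k)
      rw [hek, Nat.add_sub_cancel' hkr] at this
      exact_mod_cast this

variable {k r : ℕ} {e : Finset V}

lemma card_cliquesThrough_le (hek : #e = k) :
    #(cliquesThrough H k r e) ≤ #(cliques H k (r - k)) := by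
  refine card_le_card_of_injOn (· \ e) (fun A hA => ?_) (fun A hA A' hA' hAA' => ?_)
  · simp only [cliquesThrough, cliques, mem_coe, mem_filter, mem_powersetCard_univ] at hA ⊢
    obtain ⟨hAr, hA, heA⟩ := hA
    refine ⟨by rw [card_sdiff_of_subset heA, hAr, hek], fun f hf => hA f ?_⟩
    exact powersetCard_mono sdiff_subset hf
  · simp only [cliquesThrough, mem_coe, mem_filter] at hA hA'
    rw [← sdiff_union_of_subset hA.2.2, ← sdiff_union_of_subset hA'.2.2]
    exact congrArg (· ∪ e) hAA'

lemma exists_nonEdgeCompletion_of_not_clique (he : e ∈ H) (hek : #e = k) {B : Finset V}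
    (hB : ∀ f ∈ B.powersetCard k, f ∈ H) (hBe : ¬ ∀ f ∈ (B ∪ e).powersetCard k, f ∈ H) :
    ∃ T ∈ (e.powerset.erase ∅).erase e, ∃ U ∈ nonEdgeCompletions H T (k - #T), U ⊆ B := by
  simp only [not_forall] at hBe
  obtain ⟨f, hf, hfH⟩ := hBe
  rw [mem_powersetCard] at hf
  have hfeB : f \ e ⊆ B := fun x hx => by
    have := hf.1 (mem_sdiff.1 hx).1
    simp only [mem_union] at this
    exact this.resolve_right (mem_sdiff.1 hx).2
  refine ⟨f ∩ e, ?_, f \ e, ?_, hfeB⟩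
  · simp only [mem_erase, mem_powerset]
    refine ⟨fun hfe => hfH ?_, fun hfe => hfH (hB f ?_), inter_subset_right⟩
    · have hef : e ⊆ f := hfe ▸ inter_subset_left
      rwa [← eq_of_subset_of_card_le hef (by rw [hek, hf.2])]
    · rw [mem_powersetCard]
      refine ⟨?_, hf.2⟩
      rwa [← sdiff_union_inter f e, hfe, union_empty]
  · simp only [nonEdgeCompletions, mem_filter, mem_powersetCard_univ]
    refine ⟨?_, disjoint_sdiff_inter f e, ?_⟩
    · have := card_sdiff_add_card_inter f e
      omega
    · rwa [union_comm, sdiff_union_inter]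

lemma cliques_subset (he : e ∈ H) (hek : #e = k) (hkr : k ≤ r) :
    cliques H k (r - k) ⊆ (cliquesThrough H k r e).image (· \ e)
      ∪ e.biUnion (fun x => supersetsOfCard {x} (r - k))
      ∪ ((e.powerset.erase ∅).erase e).biUnion
          (fun T => (nonEdgeCompletions H T (k - #T)).biUnion (supersetsOfCard · (r - k))) := by
  intro B hB
  simp only [cliques, mem_filter, mem_powersetCard_univ] at hB
  obtain ⟨hBc, hB⟩ := hB
  simp only [mem_union, mem_image, mem_biUnion, cliquesThrough, supersetsOfCard, mem_filter,
    mem_powersetCard_univ, singleton_subset_iff]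
  by_cases hBe : Disjoint B e
  · by_cases hcl : ∀ f ∈ (B ∪ e).powersetCard k, f ∈ H
    · refine Or.inl (Or.inl ⟨B ∪ e, ⟨?_, hcl, subset_union_right⟩, ?_⟩)
      · rw [card_union_of_disjoint hBe, hBc, hek]; omega
      · rw [union_sdiff_right, hBe.sdiff_eq_left]
    · obtain ⟨T, hT, U, hU, hUB⟩ := exists_nonEdgeCompletion_of_not_clique he hek hB hcl
      exact Or.inr ⟨T, hT, U, hU, hBc, hUB⟩
  · obtain ⟨x, hxB, hxe⟩ := not_disjoint_iff.1 hBe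
    exact Or.inl (Or.inr ⟨x, hxe, hBc, hxB⟩)

lemma card_cliques_le (he : e ∈ H) (hek : #e = k) (hkr : k ≤ r) :
    #(cliques H k (r - k)) ≤ #(cliquesThrough H k r e)
      + ∑ x ∈ e, #(supersetsOfCard {x} (r - k))
      + ∑ T ∈ (e.powerset.erase ∅).erase e,
          ∑ U ∈ nonEdgeCompletions H T (k - #T), #(supersetsOfCard U (r - k)) := by
  refine (card_le_card (cliques_subset he hek hkr)).trans ?_
  refine (card_union_le _ _).trans (add_le_add ((card_union_le _ _).trans
    (add_le_add card_image_le card_biUnion_le)) (card_biUnion_le.trans ?_))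
  exact sum_le_sum fun T _ => card_biUnion_le

end Hypergraph

theorem stmt_3_general {V : Type*} [Fintype V] [DecidableEq V]
    (k r : ℕ) (hk : 2 ≤ k) (hkr : k < r) (hrn : r < Fintype.card V)
    (δ : ℝ) (hδ0 : 1/(Fintype.card V : ℝ) < δ)
    (H : Finset (Finset V)) (hH : ∀ e ∈ H, e.card = k)
    (hcodeg : ∀ S : Finset V, S.card = k - 1 →
      (1 - δ) * (Fintype.card V : ℝ) ≤
        ((univ.filter (fun v => v ∉ S ∧ insert v S ∈ H)).card : ℝ))
    (e : Finset V) (he : e ∈ H) :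
    ((((univ.powersetCard (r - k)).filter
          (fun A : Finset V => ∀ f ∈ A.powersetCard k, f ∈ H)).card : ℝ)
        - 2*(k:ℝ)*δ*(Fintype.card V : ℝ)^(r-k)/((r-k).factorial : ℝ) * (r.choose (k-1) : ℝ)
      ≤ (((univ.powersetCard r).filter
          (fun A : Finset V => (∀ f ∈ A.powersetCard k, f ∈ H) ∧ e ⊆ A)).card : ℝ)) ∧
    ((((univ.powersetCard r).filter
          (fun A : Finset V => (∀ f ∈ A.powersetCard k, f ∈ H) ∧ e ⊆ A)).card : ℝ)
      ≤ (((univ.powersetCard (r - k)).filter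
          (fun A : Finset V => ∀ f ∈ A.powersetCard k, f ∈ H)).card : ℝ)) := by
  have hek := hH e he
  refine ⟨?_, by exact_mod_cast card_cliquesThrough_le (H := H) (r := r) hek⟩
  have hV : 0 < Fintype.card V := by omega
  have hVR : (0 : ℝ) < Fintype.card V := by exact_mod_cast hV
  have hδV : 1 ≤ δ * Fintype.card V := ((div_lt_iff₀ hVR).1 hδ0).le
  have hδ : 0 ≤ δ := (div_pos one_pos hVR).le.trans hδ0.le
  have hmiss S (hS : #S = k - 1) := card_nonNeighbors_le (hcodeg S hS)
  have hcount : (#(cliques H k (r - k)) : ℝ) ≤ #(cliquesThrough H k r e)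
      + ∑ x ∈ e, (#(supersetsOfCard {x} (r - k)) : ℝ)
      + ∑ T ∈ (e.powerset.erase ∅).erase e,
          ∑ U ∈ nonEdgeCompletions H T (k - #T), (#(supersetsOfCard U (r - k)) : ℝ) := by
    exact_mod_cast card_cliques_le he hek hkr.le
  have hmeet := sum_card_supersetsOfCard_singleton_le hek (r - k) hδV
  have hnonEdge := sum_sum_card_supersetsOfCard_nonEdgeCompletions_le hek hkr.le hV hδ hmiss
  have hcoef : ((r - k : ℕ) : ℝ) ≤ r.choose (k - 1) := by
    exact_mod_cast Nat.sub_le_choose_sub_one hk hkr.le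
  have hfact : (0 : ℝ) < (r - k).factorial := by positivity
  rw [mul_comm _ (r.choose (k - 1) : ℝ), ← mul_div_assoc, sub_le_iff_le_add', ← sub_le_iff_le_add,
    le_div_iff₀ hfact]
  change ((#(cliques H k (r - k)) : ℝ) - #(cliquesThrough H k r e)) * _ ≤ _
  linarith [mul_le_mul_of_nonneg_right hcount hfact.le,
    mul_le_mul_of_nonneg_left hcoef (by positivity : (0 : ℝ) ≤ k * (δ * Fintype.card V ^ (r - k)))]

/-- Proposition 3.2, equation (3): bounds on the number of r-cliques containing
a fixed edge in a k-uniform hypergraph with large minimum codegree. -/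
theorem stmt_3 {V : Type*} [Fintype V] [DecidableEq V]
    (k r : ℕ) (hk : 2 ≤ k) (hkr : k < r) (hrn : r < Fintype.card V)
    (δ : ℝ) (hδ0 : 1/(Fintype.card V : ℝ) < δ) (hδ1 : δ < 1)
    (H : Finset (Finset V)) (hH : ∀ e ∈ H, e.card = k)
    (hcodeg : ∀ S : Finset V, S.card = k - 1 →
      (1 - δ) * (Fintype.card V : ℝ) ≤
        ((univ.filter (fun v => v ∉ S ∧ insert v S ∈ H)).card : ℝ))
    (e : Finset V) (he : e ∈ H) :
    ((((univ.powersetCard (r - k)).filter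
          (fun A : Finset V => ∀ f ∈ A.powersetCard k, f ∈ H)).card : ℝ)
        - 2*(k:ℝ)*δ*(Fintype.card V : ℝ)^(r-k)/((r-k).factorial : ℝ) * (r.choose (k-1) : ℝ)
      ≤ (((univ.powersetCard r).filter
          (fun A : Finset V => (∀ f ∈ A.powersetCard k, f ∈ H) ∧ e ⊆ A)).card : ℝ)) ∧
    ((((univ.powersetCard r).filter
          (fun A : Finset V => (∀ f ∈ A.powersetCard k, f ∈ H) ∧ e ⊆ A)).card : ℝ)
      ≤ (((univ.powersetCard (r - k)).filter
          (fun A : Finset V => ∀ f ∈ A.powersetCard k, f ∈ H)).card : ℝ)) :=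
  stmt_3_general k r hk hkr hrn δ hδ0 H hH hcodeg e he
end

section
/- Let $r, n \in \mathbb{N}$, $\delta \le 1/(2r)$, and let $G$ be a graph on $n$ vertices with $\delta(G) \ge (1-\delta)n$. Let $t < r$ be a positive integer and let $Z \subseteq V(G)$ with $|Z| = t$ induce a complete graph. Then the number $\kappa_Z^{(r)}$ of $r$-cliques of $G$ whose vertex set contains $Z$ satisfies $|\kappa_Z^{(r)} - k_{r-t}| \le 2t\delta r\, k_{r-t}$. -/
/-
Write `N(Z)` for the common neighbourhood of `Z` and `k_s` for the number of `s`-cliques. Removing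
`Z` is a bijection from the `r`-cliques containing the clique `Z` onto the `(r-t)`-cliques inside
`N(Z)`, so `k_{r-t} - κ_Z^{(r)}` counts the `(r-t)`-cliques that meet the complement of `N(Z)`.
That complement has at most `t δ n` vertices, each lying in at most `k_{r-t-1}` cliques of size
`r - t`, so the defect is at most `t δ n k_{r-t-1}`. Counting pairs `(K, v)` with `K` an `s`-clique
and `v ∈ N(K)` in two ways gives `k_s (n - s δ n) ≤ (s + 1) k_{s+1}`, and `s δ ≤ 1/2` turns this
into `n k_{r-t-1} ≤ 2 r k_{r-t}`.
-/

open Finset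

lemma Finset.sum_card_eq_sum_card_filter_mem {α β : Type*} [Fintype β] [DecidableEq β]
    (s : Finset α) (f : α → Finset β) : ∑ a ∈ s, #(f a) = ∑ b, #{a ∈ s | b ∈ f a} :=
  (sum_congr rfl fun a _ => congrArg card (filter_univ_mem (f a)).symm).trans
    (sum_card_bipartiteAbove_eq_sum_card_bipartiteBelow (fun a b => b ∈ f a))

namespace SimpleGraph

variable {V : Type*} [Fintype V] {G : SimpleGraph V} [DecidableRel G.Adj]

section MinDegree

variable [Nonempty V] {δ : ℝ} (hmin : (1 - δ) * Fintype.card V ≤ G.minDegree)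
include hmin

lemma cast_card_sub_minDegree_le :
    ((Fintype.card V - G.minDegree : ℕ) : ℝ) ≤ δ * Fintype.card V := by
  rw [Nat.cast_sub G.minDegree_lt_card.le]
  linarith

lemma pos_of_one_sub_mul_card_le_minDegree : 0 < δ := by
  have h : (0 : ℝ) < (Fintype.card V - G.minDegree : ℕ) := by
    exact_mod_cast Nat.sub_pos_of_lt G.minDegree_lt_card
  exact pos_of_mul_pos_left (h.trans_le (cast_card_sub_minDegree_le hmin)) (Nat.cast_nonneg _)

end MinDegree

variable (G) in
def commonNbhd (S : Finset V) : Finset V := {v | ∀ z ∈ S, G.Adj z v}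

@[simp]
lemma mem_commonNbhd {S : Finset V} {v : V} : v ∈ G.commonNbhd S ↔ ∀ z ∈ S, G.Adj z v := by
  simp [commonNbhd]

lemma disjoint_commonNbhd (S : Finset V) : Disjoint S (G.commonNbhd S) :=
  Finset.disjoint_left.2 fun _ hz hv => G.irrefl (mem_commonNbhd.1 hv _ hz)

variable [DecidableEq V]

lemma card_cliqueFinset_filter_superset {Z : Finset V} (hZ : G.IsClique (Z : Set V)) (s : ℕ) :
    #{K ∈ G.cliqueFinset (s + #Z) | Z ⊆ K}
      = #{K ∈ G.cliqueFinset s | K ⊆ G.commonNbhd Z} := by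
  refine card_nbij' (· \ Z) (· ∪ Z) ?_ ?_ ?_ ?_
  · intro K hK
    simp only [coe_filter, mem_cliqueFinset_iff, Set.mem_ofPred_eq] at hK ⊢
    obtain ⟨hK, hZK⟩ := hK
    refine ⟨⟨hK.isClique.subset (by simp), ?_⟩, fun v hv => mem_commonNbhd.2 fun z hz => ?_⟩
    · rw [card_sdiff_of_subset hZK, hK.card_eq]; omega
    rw [mem_sdiff] at hv
    exact hK.isClique (hZK hz) hv.1 (by rintro rfl; exact hv.2 hz)
  · intro L hL
    simp only [coe_filter, mem_cliqueFinset_iff, Set.mem_ofPred_eq] at hL ⊢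
    obtain ⟨hL, hLZ⟩ := hL
    have hdisj : Disjoint L Z := ((disjoint_commonNbhd Z).mono_right hLZ).symm
    refine ⟨⟨?_, by rw [card_union_of_disjoint hdisj, hL.card_eq]⟩, subset_union_right⟩
    have := G.symm
    rw [coe_union, isClique_iff, Set.pairwise_union_of_symm]
    exact ⟨hL.isClique, hZ, fun v hv z hz _ => (mem_commonNbhd.1 (hLZ hv) z hz).symm⟩
  · intro K hK
    exact sdiff_union_of_subset (mem_filter.1 hK).2
  · intro L hL
    exact union_sdiff_cancel_right ((disjoint_commonNbhd Z).mono_right (mem_filter.1 hL).2).symm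

lemma card_cliqueFinset_filter_mem (s : ℕ) (v : V) :
    #{L ∈ G.cliqueFinset (s + 1) | v ∈ L}
      = #{K ∈ G.cliqueFinset s | v ∈ G.commonNbhd K} := by
  have h := card_cliqueFinset_filter_superset (G := G) (Z := {v}) (by simp) s
  simp only [card_singleton, singleton_subset_iff] at h
  rw [h]
  congr 1
  refine filter_congr fun K _ => ?_
  simp only [subset_iff, mem_commonNbhd, mem_singleton, forall_eq]
  exact forall₂_congr fun z _ => G.adj_comm v z

lemma card_compl_commonNbhd_le (S : Finset V) :
    #(G.commonNbhd S)ᶜ ≤ #S * (Fintype.card V - G.minDegree) := by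
  calc #(G.commonNbhd S)ᶜ ≤ #(S.biUnion fun z => (G.neighborFinset z)ᶜ) :=
        card_le_card fun v => by simp
    _ ≤ ∑ z ∈ S, #(G.neighborFinset z)ᶜ := card_biUnion_le
    _ ≤ #S * (Fintype.card V - G.minDegree) := by
        refine sum_le_card_nsmul _ _ _ fun z _ => ?_
        rw [card_compl, card_neighborFinset_eq_degree]
        exact Nat.sub_le_sub_left (G.minDegree_le_degree z) _

lemma sum_card_commonNbhd (s : ℕ) :
    ∑ K ∈ G.cliqueFinset s, #(G.commonNbhd K) = (s + 1) * #(G.cliqueFinset (s + 1)) := by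
  calc ∑ K ∈ G.cliqueFinset s, #(G.commonNbhd K)
      = ∑ v, #{K ∈ G.cliqueFinset s | v ∈ G.commonNbhd K} :=
        sum_card_eq_sum_card_filter_mem _ _
    _ = ∑ v, #{L ∈ G.cliqueFinset (s + 1) | v ∈ L} := by
        simp only [card_cliqueFinset_filter_mem]
    _ = ∑ L ∈ G.cliqueFinset (s + 1), #L := (sum_card_eq_sum_card_filter_mem _ id).symm
    _ = (s + 1) * #(G.cliqueFinset (s + 1)) := by
        rw [sum_const_nat fun L hL => (mem_cliqueFinset_iff.1 hL).card_eq, mul_comm]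

-- Truncated subtraction on the left only weakens the bound.
lemma card_cliqueFinset_mul_le (s : ℕ) :
    #(G.cliqueFinset s) * (Fintype.card V - s * (Fintype.card V - G.minDegree))
      ≤ (s + 1) * #(G.cliqueFinset (s + 1)) := by
  rw [← sum_card_commonNbhd, ← smul_eq_mul]
  refine card_nsmul_le_sum _ _ _ fun K hK => ?_
  have hcompl := card_compl_commonNbhd_le (G := G) K
  rw [card_compl, (mem_cliqueFinset_iff.1 hK).card_eq] at hcompl
  omega

lemma card_mul_card_cliqueFinset_le [Nonempty V] {δ : ℝ}
    (hmin : (1 - δ) * Fintype.card V ≤ G.minDegree) (s : ℕ) (hs : 2 * s * δ ≤ 1) :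
    Fintype.card V * #(G.cliqueFinset s) ≤ 2 * (s + 1) * #(G.cliqueFinset (s + 1)) := by
  set n := Fintype.card V
  set d := n - G.minDegree
  have hsd : 2 * (s * d) ≤ n := by
    suffices (2 * (s * d) : ℝ) ≤ n by exact_mod_cast this
    calc (2 * (s * d) : ℝ) ≤ 2 * s * (δ * n) := by
          rw [← mul_assoc]; gcongr; exact cast_card_sub_minDegree_le hmin
      _ ≤ n := by rw [← mul_assoc]; nlinarith [(Nat.cast_nonneg n : (0 : ℝ) ≤ n)]
  calc n * #(G.cliqueFinset s) ≤ 2 * (n - s * d) * #(G.cliqueFinset s) :=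
        Nat.mul_le_mul_right _ (by omega)
    _ = 2 * (#(G.cliqueFinset s) * (n - s * d)) := by ring
    _ ≤ 2 * (s + 1) * #(G.cliqueFinset (s + 1)) := by
        rw [mul_assoc]
        exact Nat.mul_le_mul_left 2 (card_cliqueFinset_mul_le s)

lemma card_cliqueFinset_filter_not_subset_le (S : Finset V) (s : ℕ) :
    #{K ∈ G.cliqueFinset (s + 1) | ¬K ⊆ S} ≤ #Sᶜ * #(G.cliqueFinset s) := by
  calc #{K ∈ G.cliqueFinset (s + 1) | ¬K ⊆ S}
      ≤ #(Sᶜ.biUnion fun v => {L ∈ G.cliqueFinset (s + 1) | v ∈ L}) := by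
        refine card_le_card fun K hK => ?_
        obtain ⟨hK, hKS⟩ := mem_filter.1 hK
        obtain ⟨v, hvK, hvS⟩ := not_subset.1 hKS
        exact mem_biUnion.2 ⟨v, mem_compl.2 hvS, mem_filter.2 ⟨hK, hvK⟩⟩
    _ ≤ ∑ v ∈ Sᶜ, #{L ∈ G.cliqueFinset (s + 1) | v ∈ L} := card_biUnion_le
    _ ≤ #Sᶜ * #(G.cliqueFinset s) := by
        refine sum_le_card_nsmul _ _ _ fun v _ => ?_
        rw [card_cliqueFinset_filter_mem]
        exact card_filter_le _ _

lemma card_cliqueFinset_filter_not_subset_commonNbhd_le [Nonempty V] {δ : ℝ}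
    (hmin : (1 - δ) * Fintype.card V ≤ G.minDegree) (Z : Finset V) (s : ℕ)
    (hs : 2 * s * δ ≤ 1) :
    (#{K ∈ G.cliqueFinset (s + 1) | ¬K ⊆ G.commonNbhd Z} : ℝ)
      ≤ 2 * #Z * δ * (s + 1) * #(G.cliqueFinset (s + 1)) := by
  have hδ := (pos_of_one_sub_mul_card_le_minDegree hmin).le
  calc (#{K ∈ G.cliqueFinset (s + 1) | ¬K ⊆ G.commonNbhd Z} : ℝ)
      ≤ #Z * (Fintype.card V - G.minDegree : ℕ) * #(G.cliqueFinset s) := by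
        exact_mod_cast (card_cliqueFinset_filter_not_subset_le _ s).trans
          (Nat.mul_le_mul_right _ (card_compl_commonNbhd_le Z))
    _ ≤ #Z * δ * (Fintype.card V * #(G.cliqueFinset s)) := by
        rw [← mul_assoc, mul_assoc _ δ]; gcongr; exact cast_card_sub_minDegree_le hmin
    _ ≤ #Z * δ * (2 * (s + 1) * #(G.cliqueFinset (s + 1))) :=
        mul_le_mul_of_nonneg_left (by exact_mod_cast card_mul_card_cliqueFinset_le hmin s hs)
          (by positivity)
    _ = 2 * #Z * δ * (s + 1) * #(G.cliqueFinset (s + 1)) := by ring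

end SimpleGraph

/-- Lemma 4.2(i): the number of r-cliques containing a fixed t-clique Z is
close to the number of (r-t)-cliques. -/
theorem stmt_4 {V : Type*} [Fintype V] [DecidableEq V]
    (r t : ℕ) (δ : ℝ) (G : SimpleGraph V) [DecidableRel G.Adj]
    (hδ : δ ≤ 1/(2*(r:ℝ)))
    (hmin : (1-δ) * (Fintype.card V : ℝ) ≤ (G.minDegree : ℝ))
    (ht0 : 0 < t) (htr : t < r) (Z : Finset V) (hZ : Z.card = t)
    (hZc : G.IsClique (Z : Set V)) :
    |(((G.cliqueFinset r).filter (fun K => Z ⊆ K)).card : ℝ)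
        - ((G.cliqueFinset (r-t)).card : ℝ)|
      ≤ 2*(t:ℝ)*δ*(r:ℝ) * ((G.cliqueFinset (r-t)).card : ℝ) := by
  obtain ⟨s, hs⟩ : ∃ s, r - t = s + 1 := ⟨r - t - 1, by omega⟩
  obtain ⟨z, -⟩ := card_pos.1 (hZ ▸ ht0 : 0 < #Z)
  have : Nonempty V := ⟨z⟩
  have hδ0 := (SimpleGraph.pos_of_one_sub_mul_card_le_minDegree hmin).le
  have h2rδ : 2 * r * δ ≤ 1 := by
    rwa [le_div_iff₀ (by norm_cast; omega), mul_comm] at hδ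
  have hbad := SimpleGraph.card_cliqueFinset_filter_not_subset_commonNbhd_le hmin Z s <|
    h2rδ.trans' <| by gcongr; omega
  have hdiff : (#{K ∈ G.cliqueFinset r | Z ⊆ K} : ℝ) - #(G.cliqueFinset (s + 1))
      = -#{K ∈ G.cliqueFinset (s + 1) | ¬K ⊆ G.commonNbhd Z} := by
    rw [← card_filter_add_card_filter_not (s := G.cliqueFinset (s + 1)) (· ⊆ G.commonNbhd Z),
      ← SimpleGraph.card_cliqueFinset_filter_superset hZc, hZ, show s + 1 + t = r by omega]
    push_cast; ring
  have hsr : (s : ℝ) + 1 ≤ r := by exact_mod_cast (by omega : s + 1 ≤ r)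
  rw [hs, hdiff, abs_neg, abs_of_nonneg (by positivity)]
  calc _ ≤ 2 * #Z * δ * (s + 1) * #(G.cliqueFinset (s + 1)) := hbad
    _ ≤ 2 * t * δ * r * #(G.cliqueFinset (s + 1)) := by rw [hZ]; gcongr
end

section
/- Let $r, n \in \mathbb{N}$, $\delta \le 1/(2r)$, and let $G$ be a graph on $n$ vertices with $\delta(G) \ge (1-\delta)n$. Let $t < r$ and let $Z \subseteq V(G)$ with $|Z| = t$ induce a complete graph. Then $\bigl|\kappa_Z^{(r)} - k_{r-t} + |\bigcup_{z \in Z} N^c(z)|\, k_{r-t-1}\bigr| \le 6(t\delta r)^2 k_{r-t}$, where $N^c(z) = \{y \in V(G) : zy \notin E(G)\}$ (including $z$ itself). -/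
/-!
Deleting `Z` maps the `r`-cliques through `Z` bijectively onto the `(r - t)`-cliques avoiding
`B = ⋃_{z ∈ Z} N^c(z)`, so the claim compares the number `M` of `(r - t)`-cliques meeting `B`
with `|B| k_{r-t-1}`. The union bound gives `M ≤ |B| k_{r-t-1}`. Conversely, an
`(r - t - 1)`-clique fails to extend by `b` only if it meets `N^c(b)`, and Bonferroni's inequality
then gives `|B| k_{r-t-1} - M ≤ (|B|² / 2 + |B| δ n) k_{r-t-2}` with `|B| ≤ t δ n`. Finally every
`j`-clique with `j < r` has at least `n / 2` common neighbours, so `n k_j ≤ 2 r k_{j+1}`, which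
turns `(t δ n)² k_{r-t-2}` into `(2 t δ r)² k_{r-t}`.
-/

open Finset

/-- Bonferroni's inequality of order two. -/
lemma Finset.sum_card_filter_mem_le {α : Type*} [DecidableEq α] (𝒮 : Finset (Finset α))
    (B : Finset α) :
    ∑ b ∈ B, #{S ∈ 𝒮 | b ∈ S}
      ≤ #{S ∈ 𝒮 | ¬ Disjoint S B} + ∑ P ∈ B.powersetCard 2, #{S ∈ 𝒮 | P ⊆ S} := by
  have hmem := sum_card_bipartiteAbove_eq_sum_card_bipartiteBelow (s := B) (t := 𝒮) (· ∈ ·)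
  have hpairs := sum_card_bipartiteAbove_eq_sum_card_bipartiteBelow
    (s := B.powersetCard 2) (t := 𝒮) (· ⊆ ·)
  simp only [bipartiteAbove, bipartiteBelow] at hmem hpairs
  rw [hmem, hpairs, card_filter, ← sum_add_distrib]
  refine sum_le_sum fun S _ => ?_
  have hsub : {P ∈ B.powersetCard 2 | P ⊆ S} = (S ∩ B).powersetCard 2 := by
    ext P
    simp only [mem_filter, mem_powersetCard, subset_inter_iff]
    tauto
  rw [hsub, card_powersetCard, filter_mem_eq_inter, inter_comm]
  by_cases hSB : Disjoint S B
  · simp [hSB, disjoint_iff_inter_eq_empty.1 hSB]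
  · obtain ⟨x, hx⟩ : ∃ x, #(S ∩ B) = x + 1 :=
      Nat.exists_eq_add_one.2 (card_pos.2 (not_disjoint_iff_nonempty_inter.1 hSB))
    rw [if_pos hSB, hx, Nat.choose_succ_succ, Nat.choose_one_right]
    omega

namespace SimpleGraph

variable {V : Type*} [Fintype V] {G : SimpleGraph V} [DecidableRel G.Adj]

/-- The paper's `N^c(z)`; it contains `z` itself. -/
def nonNeighborFinset (G : SimpleGraph V) [DecidableRel G.Adj] (z : V) : Finset V :=
  {y | ¬ G.Adj z y}

@[simp]
lemma mem_nonNeighborFinset {y z : V} : y ∈ G.nonNeighborFinset z ↔ ¬ G.Adj z y := by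
  simp [nonNeighborFinset]

lemma nonneg_of_card_nonNeighborFinset_le {δ : ℝ}
    (hδ : ∀ z, (#(G.nonNeighborFinset z) : ℝ) ≤ δ * Fintype.card V) :
    0 ≤ δ * Fintype.card V := by
  cases isEmpty_or_nonempty V with
  | inl _ => simp
  | inr h =>
    obtain ⟨z⟩ := h
    have hz : (1 : ℝ) ≤ #(G.nonNeighborFinset z) := by
      exact_mod_cast card_pos.2 ⟨z, by simp⟩
    linarith [hδ z]

variable [DecidableEq V]

lemma nonNeighborFinset_eq_compl (z : V) : G.nonNeighborFinset z = (G.neighborFinset z)ᶜ := by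
  ext; simp

lemma card_nonNeighborFinset_le_of_minDegree {δ : ℝ}
    (hmin : (1 - δ) * (Fintype.card V : ℝ) ≤ G.minDegree) (z : V) :
    (#(G.nonNeighborFinset z) : ℝ) ≤ δ * Fintype.card V := by
  have hdeg : (G.minDegree : ℝ) ≤ G.degree z := by exact_mod_cast G.minDegree_le_degree z
  rw [nonNeighborFinset_eq_compl, card_compl, card_neighborFinset_eq_degree,
    Nat.cast_sub (G.degree_lt_card_verts z).le]
  linarith

lemma card_biUnion_nonNeighborFinset_le {d : ℝ}
    (hd : ∀ z, (#(G.nonNeighborFinset z) : ℝ) ≤ d) (W : Finset V) :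
    (#(W.biUnion G.nonNeighborFinset) : ℝ) ≤ #W * d :=
  calc (#(W.biUnion G.nonNeighborFinset) : ℝ)
      ≤ ∑ z ∈ W, (#(G.nonNeighborFinset z) : ℝ) := by exact_mod_cast card_biUnion_le
    _ ≤ #W * d := by simpa using sum_le_sum fun z _ => hd z

lemma disjoint_biUnion_nonNeighborFinset_iff {S W : Finset V} :
    Disjoint S (W.biUnion G.nonNeighborFinset) ↔ ∀ v ∈ S, ∀ z ∈ W, G.Adj z v := by
  simp only [Finset.disjoint_left, mem_biUnion, mem_nonNeighborFinset, not_exists, not_and,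
    not_not]

lemma card_filter_superset_cliqueFinset_add {W : Finset V} (hW : G.IsClique (W : Set V))
    (m : ℕ) :
    #{K ∈ G.cliqueFinset (m + #W) | W ⊆ K}
      = #{S ∈ G.cliqueFinset m | Disjoint S (W.biUnion G.nonNeighborFinset)} := by
  simp_rw [disjoint_biUnion_nonNeighborFinset_iff]
  refine card_nbij' (· \ W) (· ∪ W) ?_ ?_ ?_ ?_
  · intro K hK
    simp only [coe_filter, mem_cliqueFinset_iff] at hK ⊢
    obtain ⟨hK, hWK⟩ := hK
    refine ⟨⟨hK.isClique.subset (by simp), ?_⟩, fun v hv z hz => ?_⟩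
    · rw [card_sdiff_of_subset hWK, hK.card_eq]; omega
    · rw [mem_sdiff] at hv
      exact hK.isClique (hWK hz) hv.1 (fun h => hv.2 (h ▸ hz))
  · intro S hS
    simp only [coe_filter, mem_cliqueFinset_iff] at hS ⊢
    obtain ⟨hS, hadj⟩ := hS
    have hSW : Disjoint S W :=
      Finset.disjoint_left.2 fun v hv hvW => G.irrefl (hadj v hv v hvW)
    refine ⟨⟨?_, ?_⟩, subset_union_right⟩
    · rw [coe_union, isClique_iff, Set.pairwise_union]
      exact ⟨hS.isClique, hW, fun v hv z hz _ => ⟨(hadj v hv z hz).symm, hadj v hv z hz⟩⟩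
    · rw [card_union_of_disjoint hSW, hS.card_eq]
  · intro K hK
    exact sdiff_union_of_subset (mem_filter.1 hK).2
  · intro S hS
    have hadj := (mem_filter.1 hS).2
    exact union_sdiff_cancel_right
      (Finset.disjoint_left.2 fun v hv hvW => G.irrefl (hadj v hv v hvW))

lemma card_filter_superset_cliqueFinset_add_le (W : Finset V) (m : ℕ) :
    #{K ∈ G.cliqueFinset (m + #W) | W ⊆ K} ≤ #(G.cliqueFinset m) := by
  by_cases hW : G.IsClique (W : Set V)
  · rw [card_filter_superset_cliqueFinset_add hW]
    exact card_filter_le _ _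
  · rw [card_eq_zero.2 (filter_eq_empty_iff.2 fun K hK hWK => hW ?_)]
    · exact Nat.zero_le _
    · exact (mem_cliqueFinset_iff.1 hK).isClique.subset (by simpa using hWK)

lemma card_filter_not_disjoint_cliqueFinset_succ_le (C : Finset V) (m : ℕ) :
    #{S ∈ G.cliqueFinset (m + 1) | ¬ Disjoint S C} ≤ #C * #(G.cliqueFinset m) :=
  calc #{S ∈ G.cliqueFinset (m + 1) | ¬ Disjoint S C}
      ≤ #(C.biUnion fun c => {S ∈ G.cliqueFinset (m + #{c}) | {c} ⊆ S}) := by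
        refine card_le_card fun S hS => ?_
        obtain ⟨hS, hSC⟩ := mem_filter.1 hS
        obtain ⟨c, hcS, hcC⟩ := Finset.not_disjoint_iff.1 hSC
        exact mem_biUnion.2 ⟨c, hcC, by simpa [hcS] using hS⟩
    _ ≤ ∑ c ∈ C, #{S ∈ G.cliqueFinset (m + #{c}) | {c} ⊆ S} := card_biUnion_le
    _ ≤ #C * #(G.cliqueFinset m) := by
        simpa using sum_le_sum fun c _ => card_filter_superset_cliqueFinset_add_le (G := G) {c} m

lemma card_filter_cliqueFinset_one (p : Finset V → Prop) [DecidablePred p] :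
    #{T ∈ G.cliqueFinset 1 | p T} = #{v | p {v}} := by
  symm
  refine card_bij (fun v _ => {v}) (fun v hv => ?_) (fun _ _ _ _ h => singleton_injective h) ?_
  · simpa using hv
  · intro T hT
    obtain ⟨⟨v, rfl⟩, hv⟩ : (∃ v, T = {v}) ∧ p T := by simpa using hT
    exact ⟨v, by simpa using hv, rfl⟩

lemma sum_card_filter_superset_cliqueFinset (j : ℕ) :
    ∑ S ∈ G.cliqueFinset j, #{K ∈ G.cliqueFinset (j + 1) | S ⊆ K}
      = (j + 1) * #(G.cliqueFinset (j + 1)) := by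
  refine (sum_card_bipartiteAbove_eq_sum_card_bipartiteBelow
    (fun S K : Finset V => S ⊆ K)).trans ?_
  rw [mul_comm, ← smul_eq_mul, ← sum_const]
  refine sum_congr rfl fun K hK => ?_
  have hK := mem_cliqueFinset_iff.1 hK
  have : bipartiteBelow (· ⊆ ·) (G.cliqueFinset j) K = K.powersetCard j := by
    ext S
    simp only [mem_bipartiteBelow, mem_cliqueFinset_iff, mem_powersetCard]
    exact ⟨fun h => ⟨h.2, h.1.card_eq⟩,
      fun h => ⟨⟨hK.isClique.subset (by simpa using h.1), h.2⟩, h.1⟩⟩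
  rw [this, card_powersetCard, hK.card_eq, Nat.choose_succ_self_right]

lemma card_sub_mul_mul_card_cliqueFinset_le {d : ℝ}
    (hd : ∀ z, (#(G.nonNeighborFinset z) : ℝ) ≤ d) (j : ℕ) :
    (Fintype.card V - j * d) * #(G.cliqueFinset j) ≤ (j + 1) * #(G.cliqueFinset (j + 1)) := by
  have hext : ∀ S ∈ G.cliqueFinset j,
      Fintype.card V - j * d ≤ #{K ∈ G.cliqueFinset (j + 1) | S ⊆ K} := by
    intro S hS
    have hS := mem_cliqueFinset_iff.1 hS
    have hcount := card_filter_superset_cliqueFinset_add hS.isClique 1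
    rw [hS.card_eq, add_comm, card_filter_cliqueFinset_one] at hcount
    have hB := card_biUnion_nonNeighborFinset_le hd S
    rw [hcount, filter_congr fun v _ => Finset.disjoint_singleton_left, filter_not,
      filter_mem_eq_inter, univ_inter, card_univ_sdiff, Nat.cast_sub (card_le_univ _)]
    rw [hS.card_eq] at hB
    linarith
  calc (Fintype.card V - j * d) * #(G.cliqueFinset j)
      ≤ ∑ S ∈ G.cliqueFinset j, (#{K ∈ G.cliqueFinset (j + 1) | S ⊆ K} : ℝ) := by
        simpa [mul_comm] using card_nsmul_le_sum _ _ _ hext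
    _ = (j + 1) * #(G.cliqueFinset (j + 1)) := by
        exact_mod_cast sum_card_filter_superset_cliqueFinset j

lemma card_cliqueFinset_succ_le (b : V) (m : ℕ) :
    #(G.cliqueFinset (m + 1))
      ≤ #{S ∈ G.cliqueFinset (m + 2) | b ∈ S}
        + #(G.nonNeighborFinset b) * #(G.cliqueFinset m) := by
  rw [← card_filter_add_card_filter_not (s := G.cliqueFinset (m + 1))
    (fun T => Disjoint T (G.nonNeighborFinset b))]
  refine add_le_add (le_of_eq ?_) (card_filter_not_disjoint_cliqueFinset_succ_le _ _)
  have hext := card_filter_superset_cliqueFinset_add (G := G) (W := {b}) (by simp) (m + 1)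
  rw [singleton_biUnion, card_singleton] at hext
  simpa [singleton_subset_iff] using hext.symm

lemma card_mul_card_cliqueFinset_sub_le {d : ℝ} (hd : ∀ z, (#(G.nonNeighborFinset z) : ℝ) ≤ d)
    (B : Finset V) (m : ℕ) :
    (#B : ℝ) * #(G.cliqueFinset (m + 1)) - #{S ∈ G.cliqueFinset (m + 2) | ¬ Disjoint S B}
      ≤ (#B ^ 2 / 2 + #B * d) * #(G.cliqueFinset m) := by
  have hpairs : ∑ P ∈ B.powersetCard 2, #{S ∈ G.cliqueFinset (m + 2) | P ⊆ S}
      ≤ (#B).choose 2 * #(G.cliqueFinset m) := by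
    rw [← card_powersetCard, ← smul_eq_mul, ← sum_const]
    refine sum_le_sum fun P hP => ?_
    simpa [(mem_powersetCard.1 hP).2] using card_filter_superset_cliqueFinset_add_le (G := G) P m
  have hnat : #B * #(G.cliqueFinset (m + 1))
      ≤ #{S ∈ G.cliqueFinset (m + 2) | ¬ Disjoint S B} + (#B).choose 2 * #(G.cliqueFinset m)
        + ∑ b ∈ B, #(G.nonNeighborFinset b) * #(G.cliqueFinset m) :=
    calc #B * #(G.cliqueFinset (m + 1))
        = ∑ _b ∈ B, #(G.cliqueFinset (m + 1)) := by rw [sum_const, smul_eq_mul]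
      _ ≤ ∑ b ∈ B, (#{S ∈ G.cliqueFinset (m + 2) | b ∈ S}
            + #(G.nonNeighborFinset b) * #(G.cliqueFinset m)) :=
          sum_le_sum fun b _ => card_cliqueFinset_succ_le b m
      _ ≤ _ := by
          rw [sum_add_distrib]
          gcongr
          exact (sum_card_filter_mem_le _ B).trans (add_le_add_right hpairs _)
  have hnon : ∑ b ∈ B, (#(G.nonNeighborFinset b) : ℝ) * #(G.cliqueFinset m)
      ≤ #B * d * #(G.cliqueFinset m) := by
    rw [← sum_mul]
    gcongr
    simpa using sum_le_sum fun b _ => hd b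
  have hchoose : (((#B).choose 2 : ℕ) : ℝ) ≤ #B ^ 2 / 2 := by
    rw [Nat.cast_choose_two]
    nlinarith [(Nat.cast_nonneg #B : (0 : ℝ) ≤ #B)]
  have hk : (0 : ℝ) ≤ #(G.cliqueFinset m) := Nat.cast_nonneg _
  have hreal : (#B : ℝ) * #(G.cliqueFinset (m + 1))
      ≤ #{S ∈ G.cliqueFinset (m + 2) | ¬ Disjoint S B}
        + ((#B).choose 2 : ℕ) * #(G.cliqueFinset m)
        + ∑ b ∈ B, (#(G.nonNeighborFinset b) : ℝ) * #(G.cliqueFinset m) := by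
    exact_mod_cast hnat
  nlinarith [mul_le_mul_of_nonneg_right hchoose hk]

lemma card_mul_card_cliqueFinset_le_s5 {d : ℝ} {r j : ℕ}
    (hd : ∀ z, (#(G.nonNeighborFinset z) : ℝ) ≤ d) (hd0 : 0 ≤ d)
    (hrd : 2 * r * d ≤ Fintype.card V) (hj : j < r) :
    (Fintype.card V : ℝ) * #(G.cliqueFinset j) ≤ 2 * r * #(G.cliqueFinset (j + 1)) := by
  have hjr : (j : ℝ) + 1 ≤ r := by exact_mod_cast hj
  have hjd : (j : ℝ) * d ≤ Fintype.card V / 2 := by nlinarith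
  calc (Fintype.card V : ℝ) * #(G.cliqueFinset j)
      ≤ 2 * ((Fintype.card V - j * d) * #(G.cliqueFinset j)) := by
        nlinarith [(Nat.cast_nonneg _ : (0 : ℝ) ≤ #(G.cliqueFinset j))]
    _ ≤ 2 * ((j + 1) * #(G.cliqueFinset (j + 1))) := by
        gcongr 2 * ?_; exact card_sub_mul_mul_card_cliqueFinset_le hd j
    _ ≤ 2 * r * #(G.cliqueFinset (j + 1)) := by
        rw [mul_assoc]; gcongr

lemma sq_card_mul_card_cliqueFinset_le {d : ℝ} {r m : ℕ}
    (hd : ∀ z, (#(G.nonNeighborFinset z) : ℝ) ≤ d) (hd0 : 0 ≤ d)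
    (hrd : 2 * r * d ≤ Fintype.card V) (hm : m + 2 ≤ r) :
    (Fintype.card V : ℝ) ^ 2 * #(G.cliqueFinset m) ≤ (2 * r) ^ 2 * #(G.cliqueFinset (m + 2)) :=
  calc (Fintype.card V : ℝ) ^ 2 * #(G.cliqueFinset m)
      = Fintype.card V * (Fintype.card V * #(G.cliqueFinset m)) := by ring
    _ ≤ Fintype.card V * (2 * r * #(G.cliqueFinset (m + 1))) := by
        gcongr Fintype.card V * ?_
        exact card_mul_card_cliqueFinset_le_s5 (j := m) hd hd0 hrd (by omega)
    _ = 2 * r * (Fintype.card V * #(G.cliqueFinset (m + 1))) := by ring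
    _ ≤ 2 * r * (2 * r * #(G.cliqueFinset (m + 2))) := by
        gcongr 2 * r * ?_
        exact card_mul_card_cliqueFinset_le_s5 (j := m + 1) hd hd0 hrd (by omega)
    _ = (2 * r) ^ 2 * #(G.cliqueFinset (m + 2)) := by ring

lemma card_cliqueFinset_zero : #(G.cliqueFinset 0) = 1 := by
  rw [card_eq_one]
  exact ⟨∅, by ext; simp⟩

lemma card_filter_not_disjoint_cliqueFinset_one (C : Finset V) :
    #{S ∈ G.cliqueFinset 1 | ¬ Disjoint S C} = #C := by
  simp [card_filter_cliqueFinset_one]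

lemma abs_card_mul_card_cliqueFinset_sub_le {δ : ℝ} {r t s : ℕ}
    (hd : ∀ z, (#(G.nonNeighborFinset z) : ℝ) ≤ δ * Fintype.card V)
    (hrd : 2 * r * (δ * Fintype.card V) ≤ Fintype.card V) {B : Finset V}
    (hB : (#B : ℝ) ≤ t * (δ * Fintype.card V)) (hs : s + 1 ≤ r) :
    |(#B : ℝ) * #(G.cliqueFinset s) - #{S ∈ G.cliqueFinset (s + 1) | ¬ Disjoint S B}|
      ≤ 6 * (t * δ * r) ^ 2 * #(G.cliqueFinset (s + 1)) := by
  have hd0 := nonneg_of_card_nonNeighborFinset_le hd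
  have hfirst :
      (#{S ∈ G.cliqueFinset (s + 1) | ¬ Disjoint S B} : ℝ) ≤ #B * #(G.cliqueFinset s) := by
    exact_mod_cast card_filter_not_disjoint_cliqueFinset_succ_le B s
  have hRHS : 0 ≤ 6 * ((t : ℝ) * δ * r) ^ 2 * #(G.cliqueFinset (s + 1)) := by positivity
  rw [abs_le]
  refine ⟨by linarith, ?_⟩
  rcases s with _ | m
  · simpa [card_cliqueFinset_zero, card_filter_not_disjoint_cliqueFinset_one] using hRHS
  have hBd : (#B : ℝ) ^ 2 / 2 + #B * (δ * Fintype.card V)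
      ≤ 3 / 2 * (t * (δ * Fintype.card V)) ^ 2 := by
    have ht : (t : ℝ) ≤ t ^ 2 := by norm_cast; exact Nat.le_self_pow two_ne_zero t
    nlinarith [mul_le_mul_of_nonneg_right ht (sq_nonneg (δ * Fintype.card V))]
  calc _ ≤ (#B ^ 2 / 2 + #B * (δ * Fintype.card V)) * #(G.cliqueFinset m) :=
        card_mul_card_cliqueFinset_sub_le hd B m
    _ ≤ 3 / 2 * (t * δ) ^ 2 * (Fintype.card V ^ 2 * #(G.cliqueFinset m)) := by
        nlinarith [mul_le_mul_of_nonneg_right hBd (Nat.cast_nonneg #(G.cliqueFinset m))]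
    _ ≤ 3 / 2 * (t * δ) ^ 2 * ((2 * r) ^ 2 * #(G.cliqueFinset (m + 2))) := by
        gcongr 3 / 2 * (t * δ) ^ 2 * ?_
        exact sq_card_mul_card_cliqueFinset_le hd hd0 hrd hs
    _ = 6 * (t * δ * r) ^ 2 * #(G.cliqueFinset (m + 1 + 1)) := by ring

end SimpleGraph

open SimpleGraph in
/-- Lemma 4.2(ii): second-order estimate on the number of r-cliques containing
a fixed t-clique Z. -/
theorem stmt_5 {V : Type*} [Fintype V] [DecidableEq V]
    (r t : ℕ) (δ : ℝ) (G : SimpleGraph V) [DecidableRel G.Adj]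
    (hδ : δ ≤ 1/(2*(r:ℝ)))
    (hmin : (1-δ) * (Fintype.card V : ℝ) ≤ (G.minDegree : ℝ))
    (htr : t < r) (Z : Finset V) (hZ : Z.card = t)
    (hZc : G.IsClique (Z : Set V)) :
    |(((G.cliqueFinset r).filter (fun K => Z ⊆ K)).card : ℝ)
        - ((G.cliqueFinset (r-t)).card : ℝ)
        + ((Z.biUnion (fun z => univ.filter (fun y => ¬ G.Adj z y))).card : ℝ)
          * ((G.cliqueFinset (r-t-1)).card : ℝ)|
      ≤ 6*((t:ℝ)*δ*(r:ℝ))^2 * ((G.cliqueFinset (r-t)).card : ℝ) := by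
  change |_ - _ + (#(Z.biUnion G.nonNeighborFinset) : ℝ) * _| ≤ _
  set B := Z.biUnion G.nonNeighborFinset
  have hd := card_nonNeighborFinset_le_of_minDegree hmin
  have hrd : 2 * r * (δ * Fintype.card V) ≤ Fintype.card V := by
    have hr : (0 : ℝ) < 2 * r := by norm_cast; omega
    rw [le_div_iff₀ hr] at hδ
    nlinarith [mul_le_mul_of_nonneg_right hδ (Nat.cast_nonneg (Fintype.card V))]
  have hB : (#B : ℝ) ≤ t * (δ * Fintype.card V) :=
    hZ ▸ card_biUnion_nonNeighborFinset_le hd Z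
  obtain ⟨s, hs⟩ : ∃ s, r - t = s + 1 := ⟨r - t - 1, by omega⟩
  have hsplit : #{K ∈ G.cliqueFinset r | Z ⊆ K} + #{S ∈ G.cliqueFinset (s + 1) | ¬ Disjoint S B}
      = #(G.cliqueFinset (s + 1)) := by
    rw [show r = s + 1 + #Z by omega, card_filter_superset_cliqueFinset_add hZc]
    exact card_filter_add_card_filter_not _
  rw [hs, Nat.add_sub_cancel]
  convert abs_card_mul_card_cliqueFinset_sub_le hd hrd hB (by omega : s + 1 ≤ r) using 2
  rw [← hsplit]
  push_cast
  ring
end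

section
/- Let $r > k \ge 2$ and define real numbers $\alpha_k, \alpha_{k-1}, \dots, \alpha_0$ by $\alpha_k = 1/\binom{r}{k}$ and, recursively for $i < k$, by the relation $\sum_{j=i}^{k} \binom{k-i}{j-i}\binom{r-k+i}{j}\,\alpha_j = 0$. Then for every $0 \le i \le k$, $|\alpha_i| \le \frac{2^{k-i}(k-i)!}{\binom{r-k+i}{i}}$. -/
/-!
Solving the triangular system for `α i` gives
`C(n+i, i) α_i = - ∑_{i < j ≤ k} C(k-i, j-i) C(n+i, j) α_j` with `n = r - k`.
By downward induction, `C(n+i, j) ≤ C(n+j, j)` cancels the denominator of the bound on `α_j`,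
and `C(k-i, j-i) (k-j)! ≤ (k-i)!`, so the `j`-th term is at most `(k-i)! 2^(k-j)`;
the geometric sum `∑_{i < j ≤ k} 2^(k-j) < 2^(k-i)` closes the induction.
-/

open Finset Nat

lemma choose_mul_factorial_sub_le_factorial {m a : ℕ} (h : a ≤ m) :
    m.choose a * (m - a)! ≤ m ! := by
  rw [← choose_mul_factorial_mul_factorial h, mul_right_comm]
  exact Nat.le_mul_of_pos_right _ a.factorial_pos

lemma sum_Ioc_two_pow_sub_lt (i k : ℕ) : ∑ j ∈ Ioc i k, 2 ^ (k - j) < 2 ^ (k - i) := by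
  have hinj : Set.InjOn (k - ·) (Ioc i k : Set ℕ) := by
    intro x hx y hy hxy
    simp only [coe_Ioc, Set.mem_Ioc] at hx hy hxy
    omega
  rw [← sum_image (f := (2 ^ ·)) hinj]
  refine Nat.geomSum_lt le_rfl fun s hs => ?_
  obtain ⟨j, hj, rfl⟩ := mem_image.1 hs
  rw [mem_Ioc] at hj
  omega

variable {n k i : ℕ}

lemma abs_choose_mul_choose_mul_le {j : ℕ} (hij : i ≤ j) (hjk : j ≤ k) {a : ℝ}
    (ha : |a| ≤ 2 ^ (k - j) * (k - j)! / (n + j).choose j) :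
    |((k - i).choose (j - i) : ℝ) * (n + i).choose j * a| ≤ (k - i)! * 2 ^ (k - j) := by
  have hpos : (0 : ℝ) < (n + j).choose j := by exact_mod_cast choose_pos (Nat.le_add_left j n)
  have hchoose : ((n + i).choose j : ℝ) ≤ (n + j).choose j := by
    exact_mod_cast choose_le_choose j (by omega)
  have hfact : ((k - i).choose (j - i) * (k - j)! : ℝ) ≤ (k - i)! := by
    have h := choose_mul_factorial_sub_le_factorial (show j - i ≤ k - i by omega)
    rw [show k - i - (j - i) = k - j by omega] at h
    exact_mod_cast h
  rw [abs_mul, abs_mul, abs_of_nonneg (by positivity), abs_of_nonneg (by positivity)]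
  calc ((k - i).choose (j - i) : ℝ) * (n + i).choose j * |a|
      ≤ (k - i).choose (j - i) * (n + j).choose j * (2 ^ (k - j) * (k - j)! / (n + j).choose j) := by
        gcongr
    _ = (k - i).choose (j - i) * (k - j)! * 2 ^ (k - j) := by field_simp
    _ ≤ (k - i)! * 2 ^ (k - j) := by gcongr

lemma abs_le_of_sum_choose_mul_eq_zero (hik : i < k) {α : ℕ → ℝ}
    (hrec : ∑ j ∈ Icc i k, ((k - i).choose (j - i) : ℝ) * (n + i).choose j * α j = 0)
    (hlater : ∀ j ∈ Ioc i k, |α j| ≤ 2 ^ (k - j) * (k - j)! / (n + j).choose j) :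
    |α i| ≤ 2 ^ (k - i) * (k - i)! / (n + i).choose i := by
  rw [Icc_eq_cons_Ioc hik.le, sum_cons] at hrec
  simp only [Nat.sub_self, choose_zero_right, cast_one, one_mul] at hrec
  set S := ∑ j ∈ Ioc i k, ((k - i).choose (j - i) : ℝ) * (n + i).choose j * α j
  have hpos : (0 : ℝ) < (n + i).choose i := by exact_mod_cast choose_pos (Nat.le_add_left i n)
  have hgeom : (∑ j ∈ Ioc i k, 2 ^ (k - j) : ℝ) ≤ 2 ^ (k - i) := by
    exact_mod_cast (sum_Ioc_two_pow_sub_lt i k).le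
  have hS : |S| ≤ (k - i)! * 2 ^ (k - i) :=
    calc |S| ≤ ∑ j ∈ Ioc i k, |((k - i).choose (j - i) : ℝ) * (n + i).choose j * α j| :=
          abs_sum_le_sum_abs _ _
      _ ≤ ∑ j ∈ Ioc i k, ((k - i)! * 2 ^ (k - j) : ℝ) := by
          refine sum_le_sum fun j hj => ?_
          rw [mem_Ioc] at hj
          exact abs_choose_mul_choose_mul_le hj.1.le hj.2 (hlater j (mem_Ioc.2 hj))
      _ ≤ (k - i)! * 2 ^ (k - i) := by rw [← mul_sum]; gcongr
  have hαi : ((n + i).choose i : ℝ) * |α i| = |S| := by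
    rw [← abs_of_pos hpos, ← abs_mul, eq_neg_of_add_eq_zero_left hrec, abs_neg]
  rw [le_div_iff₀ hpos, mul_comm, hαi]
  linarith

theorem abs_le_of_triangular_choose_system {α : ℕ → ℝ}
    (htop : |α k| ≤ 1 / (n + k).choose k)
    (hrec : ∀ i < k, ∑ j ∈ Icc i k,
      ((k - i).choose (j - i) : ℝ) * (n + i).choose j * α j = 0) :
    ∀ i ≤ k, |α i| ≤ 2 ^ (k - i) * (k - i)! / (n + i).choose i := by
  intro i
  induction i using Nat.strong_decreasing_induction with
  | base => exact ⟨k, fun m hmk hm => absurd hm (not_le.2 hmk)⟩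
  | step i ih =>
    intro hik
    rcases hik.lt_or_eq with hik | rfl
    · exact abs_le_of_sum_choose_mul_eq_zero hik (hrec i hik)
        fun j hj => ih j (mem_Ioc.1 hj).1 (mem_Ioc.1 hj).2
    · simpa using htop

theorem stmt_8_general (k r : ℕ) (hkr : k < r) (α : ℕ → ℝ)
    (hαk : α k = 1 / (r.choose k : ℝ))
    (hrec : ∀ i < k, ∑ j ∈ Finset.Icc i k,
      ((k - i).choose (j - i) : ℝ) * ((r - k + i).choose j : ℝ) * α j = 0) :
    ∀ i ≤ k, |α i| ≤ 2^(k-i) * ((k-i).factorial : ℝ) / ((r - k + i).choose i : ℝ) := by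
  refine abs_le_of_triangular_choose_system (n := r - k) ?_ hrec
  rw [Nat.sub_add_cancel hkr.le, hαk, abs_of_nonneg (by positivity)]

/-- Bounds on the edge-gadget coefficients α_i defined by the triangular
system of Proposition 3.3. -/
theorem stmt_8 (k r : ℕ) (hk : 2 ≤ k) (hkr : k < r) (α : ℕ → ℝ)
    (hαk : α k = 1 / (r.choose k : ℝ))
    (hrec : ∀ i < k, ∑ j ∈ Finset.Icc i k,
      ((k - i).choose (j - i) : ℝ) * ((r - k + i).choose j : ℝ) * α j = 0) :
    ∀ i ≤ k, |α i| ≤ 2^(k-i) * ((k-i).factorial : ℝ) / ((r - k + i).choose i : ℝ) :=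
  stmt_8_general k r hkr α hαk hrec
end

section
/- Let $r > k \ge 2$, let $J$ be a complete $k$-uniform hypergraph on $k+r$ vertices, and let $e$ be an edge of $J$. Then there exist real numbers $\alpha_0, \dots, \alpha_k$ such that, assigning to each copy $K$ of $K_r^{(k)}$ in $J$ the weight $\omega(K) = \alpha_{|V(e) \cap V(K)|}$, for every edge $f$ of $J$ one has $\sum_{K : f \in E(K)} \omega(K) = 1$ if $f = e$ and $= 0$ otherwise; moreover $|\alpha_i| \le \frac{2^{k-i}(k-i)!}{\binom{r-k+i}{i}}$ for all $i$. -/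
/-!
Write `x_d` for the weight of a copy `K` missing `d = |e \ K|` vertices of `e`. Passing to
complements, the copies containing `f` are the complements of the `k`-subsets `L` of `V \ f`, and
`|e \ K| = |L ∩ (e \ f)|`. Counting these by a Vandermonde splitting of `V \ f` turns the
required identities into a lower-triangular system in the weights: the equation for
`|e \ f| = d` has coefficients `C(d, u) C(r - d, k - u)` and diagonal `C(r - d, k - d) > 0`.
Solving it by forward substitution, each off-diagonal term contributes at most `d! 2^u`, which
gives `|x_d| ≤ 2^d d! / C(r - d, k - d)` by strong induction.
-/

open Finset Nat

section Counting

variable {α M : Type*} [DecidableEq α] [AddCommMonoid M]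

theorem card_filter_powersetCard_union_card_inter {T W : Finset α} (hTW : Disjoint T W)
    {m u : ℕ} (hum : u ≤ m) :
    #{L ∈ (T ∪ W).powersetCard m | #(L ∩ T) = u} = (#T).choose u * (#W).choose (m - u) := by
  rw [← card_powersetCard, ← card_powersetCard, ← card_product]
  have hsplit : ∀ {L}, L ⊆ T ∪ W → L ∩ T ∪ L ∩ W = L := fun hL => by
    rw [← inter_union_distrib_left, inter_eq_left.2 hL]
  have hinter : ∀ {A B}, A ⊆ T → B ⊆ W → (A ∪ B) ∩ T = A ∧ (A ∪ B) ∩ W = B := by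
    intro A B hA hB
    rw [disjoint_left] at hTW
    constructor <;> ext x <;> simp only [mem_inter, mem_union] <;> grind
  refine card_nbij' (fun L => (L ∩ T, L ∩ W)) (fun p => p.1 ∪ p.2) ?_ ?_ ?_ ?_
  · intro L hL
    simp only [coe_filter, mem_powersetCard, Set.mem_ofPred_eq, coe_product, Set.mem_prod,
      SetLike.mem_coe, inter_subset_right, true_and] at hL ⊢
    have hcard : #(L ∩ T ∪ L ∩ W) = #(L ∩ T) + #(L ∩ W) :=
      card_union_of_disjoint (hTW.mono inter_subset_right inter_subset_right)
    rw [hsplit hL.1.1] at hcard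
    omega
  · rintro ⟨A, B⟩ h
    simp only [coe_product, Set.mem_prod, SetLike.mem_coe, mem_powersetCard, coe_filter,
      Set.mem_ofPred_eq] at h ⊢
    obtain ⟨⟨hA, hAu⟩, hB, hBu⟩ := h
    rw [card_union_of_disjoint (hTW.mono hA hB), (hinter hA hB).1]
    exact ⟨⟨union_subset_union hA hB, by omega⟩, hAu⟩
  · intro L hL
    simp only [coe_filter, mem_powersetCard, Set.mem_ofPred_eq] at hL
    exact hsplit hL.1.1
  · rintro ⟨A, B⟩ h
    simp only [coe_product, Set.mem_prod, SetLike.mem_coe, mem_powersetCard] at h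
    exact Prod.ext_iff.2 (hinter h.1.1 h.2.1)

theorem sum_powersetCard_union_card_inter {T W : Finset α} (hTW : Disjoint T W) (m : ℕ)
    (g : ℕ → M) :
    ∑ L ∈ (T ∪ W).powersetCard m, g #(L ∩ T)
      = ∑ u ∈ range (m + 1), ((#T).choose u * (#W).choose (m - u)) • g u := by
  rw [← sum_fiberwise_of_maps_to (t := range (m + 1)) (g := fun L => #(L ∩ T))]
  · refine sum_congr rfl fun u hu => ?_
    rw [← card_filter_powersetCard_union_card_inter hTW (Nat.lt_succ_iff.1 (mem_range.1 hu)),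
      ← sum_const]
    exact sum_congr rfl fun L hL => by rw [(mem_filter.1 hL).2]
  · intro L hL
    exact mem_range.2 (Nat.lt_succ_of_le ((card_le_card inter_subset_left).trans
      (mem_powersetCard.1 hL).2.le))

theorem sum_powersetCard_filter_superset [Fintype α] (f : Finset α) {r : ℕ}
    (hr : r ≤ Fintype.card α) (g : Finset α → M) :
    ∑ K ∈ univ.powersetCard r, (if f ⊆ K then g K else 0)
      = ∑ L ∈ fᶜ.powersetCard (Fintype.card α - r), g Lᶜ := by
  rw [← sum_filter]
  refine sum_nbij' compl compl ?_ ?_ ?_ ?_ ?_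
  · intro K hK
    simp only [mem_filter, mem_powersetCard, subset_univ, true_and, compl_le_compl_iff_le] at hK ⊢
    rw [card_compl, hK.1]
    exact ⟨hK.2, rfl⟩
  · intro L hL
    simp only [mem_powersetCard, mem_filter, subset_univ, true_and] at hL ⊢
    rw [card_compl, hL.2, subset_compl_comm]
    exact ⟨by omega, hL.1⟩
  · exact fun K _ => compl_compl K
  · exact fun L _ => compl_compl L
  · exact fun K _ => by rw [compl_compl]

theorem sum_powersetCard_filter_superset_card_sdiff [Fintype α] {e f : Finset α} {k r : ℕ}
    (hV : Fintype.card α = k + r) (hf : #f = k) (g : ℕ → M) :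
    ∑ K ∈ univ.powersetCard r, (if f ⊆ K then g #(e \ K) else 0)
      = ∑ u ∈ range (k + 1), ((#(e \ f)).choose u * (r - #(e \ f)).choose (k - u)) • g u := by
  have hsplit : fᶜ = e \ f ∪ (e ∪ f)ᶜ := by
    ext x; simp only [mem_compl, mem_union, mem_sdiff]; tauto
  have hdisj : Disjoint (e \ f) (e ∪ f)ᶜ :=
    disjoint_compl_right.mono_left (sdiff_subset.trans subset_union_left)
  have hcard : #(e ∪ f)ᶜ = r - #(e \ f) := by
    rw [card_compl, ← sdiff_union_self_eq_union, card_union_of_disjoint sdiff_disjoint, hV, hf]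
    omega
  have hcompl : ∀ L ∈ fᶜ.powersetCard k, #(e \ Lᶜ) = #(L ∩ (e \ f)) := by
    intro L hL
    have hLf : Disjoint L f := subset_compl_iff_disjoint_right.1 (mem_powersetCard.1 hL).1
    rw [sdiff_compl]
    congr 1
    ext x; simp only [inf_eq_inter, mem_inter, mem_sdiff]
    have := @disjoint_left.1 hLf x
    tauto
  rw [sum_powersetCard_filter_superset f (by omega), show Fintype.card α - r = k by omega,
    sum_congr rfl fun L hL => congrArg g (hcompl L hL), hsplit,
    sum_powersetCard_union_card_inter hdisj, hcard]

end Counting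

noncomputable def lowerTriangularSolve {K : Type*} [Field K] (c : ℕ → ℕ → K) (b : ℕ → K) : ℕ → K
  | d => (b d - ∑ u : Fin d, c d u * lowerTriangularSolve c b u) / c d d

section LowerTriangular

variable {K : Type*} [Field K] (c : ℕ → ℕ → K) (b : ℕ → K)

theorem lowerTriangularSolve_eq (d : ℕ) :
    lowerTriangularSolve c b d
      = (b d - ∑ u ∈ range d, c d u * lowerTriangularSolve c b u) / c d d := by
  rw [lowerTriangularSolve, Fin.sum_univ_eq_sum_range (fun u => c d u * lowerTriangularSolve c b u)]

theorem sum_range_succ_mul_lowerTriangularSolve {d : ℕ} (hc : c d d ≠ 0) :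
    ∑ u ∈ range (d + 1), c d u * lowerTriangularSolve c b u = b d := by
  rw [sum_range_succ, lowerTriangularSolve_eq c b d, mul_div_cancel₀ _ hc]
  ring

end LowerTriangular

/-- For `k`-sets `e, f` with `|e \ f| = d` among `k + r` vertices, the number of `r`-sets
`K ⊇ f` with `|e \ K| = u`. -/
def gadgetCoeff (k r d u : ℕ) : ℝ := d.choose u * (r - d).choose (k - u)

theorem Nat.choose_mul_factorial_le_factorial {n k : ℕ} (hkn : k ≤ n) : n.choose k * k ! ≤ n ! :=
  Nat.choose_mul_factorial_mul_factorial hkn ▸ Nat.le_mul_of_pos_right _ (factorial_pos _)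

theorem abs_gadgetCoeff_mul_le {k r d u : ℕ} (hkr : k ≤ r) (hud : u < d) {y : ℝ}
    (hy : |y| ≤ 2 ^ u * u ! / (r - u).choose (k - u)) :
    |gadgetCoeff k r d u * y| ≤ d ! * 2 ^ u := by
  have hpos : (0 : ℝ) < (r - u).choose (k - u) := by
    exact_mod_cast Nat.choose_pos (by omega)
  have hchoose : ((r - d).choose (k - u) : ℝ) ≤ (r - u).choose (k - u) := by
    exact_mod_cast Nat.choose_le_choose _ (by omega)
  have hfact : (d.choose u * u ! : ℝ) ≤ d ! := by
    exact_mod_cast choose_mul_factorial_le_factorial hud.le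
  rw [abs_mul, gadgetCoeff, abs_of_nonneg (by positivity)]
  calc (d.choose u * (r - d).choose (k - u) : ℝ) * |y|
      ≤ d.choose u * (r - u).choose (k - u) * (2 ^ u * u ! / (r - u).choose (k - u)) := by
        gcongr
    _ = d.choose u * u ! * 2 ^ u := by field_simp
    _ ≤ d ! * 2 ^ u := by gcongr

theorem abs_lowerTriangularSolve_gadgetCoeff_le {k r : ℕ} (hkr : k ≤ r) {b : ℕ → ℝ}
    (hb : ∀ d, |b d| ≤ 1) {d : ℕ} (hd : d ≤ k) :
    |lowerTriangularSolve (gadgetCoeff k r) b d| ≤ 2 ^ d * d ! / (r - d).choose (k - d) := by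
  induction d using Nat.strong_induction_on with
  | _ d ih =>
  have hdiag : gadgetCoeff k r d d = (r - d).choose (k - d) := by
    simp [gadgetCoeff]
  have hpos : (0 : ℝ) < (r - d).choose (k - d) := by
    exact_mod_cast Nat.choose_pos (by omega)
  have hsum : |b d - ∑ u ∈ range d, gadgetCoeff k r d u * lowerTriangularSolve (gadgetCoeff k r) b u|
      ≤ 2 ^ d * d ! := by
    calc _ ≤ 1 + ∑ u ∈ range d, (d ! * 2 ^ u : ℝ) := by
          refine (abs_sub _ _).trans (add_le_add (hb d) ((abs_sum_le_sum_abs _ _).trans ?_))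
          refine sum_le_sum fun u hu => ?_
          have hud := mem_range.1 hu
          exact abs_gadgetCoeff_mul_le hkr hud (ih u hud (by omega))
      _ = 1 + d ! * (2 ^ d - 1) := by
          rw [← mul_sum, geom_sum_eq (by norm_num : (2 : ℝ) ≠ 1)]
          norm_num
      _ ≤ 2 ^ d * d ! := by
          have : (1 : ℝ) ≤ d ! := by exact_mod_cast factorial_pos d
          nlinarith
  rw [lowerTriangularSolve_eq, hdiag, abs_div, abs_of_pos hpos]
  gcongr

/-- The weight of a copy `K` with `|e \ K| = d`, i.e. `α (k - d)`. -/
noncomputable def gadgetWeight (k r : ℕ) : ℕ → ℝ :=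
  lowerTriangularSolve (gadgetCoeff k r) fun d => if d = 0 then 1 else 0

theorem sum_range_gadgetCoeff_mul_gadgetWeight {k r d : ℕ} (hkr : k ≤ r) (hd : d ≤ k) :
    ∑ u ∈ range (k + 1), gadgetCoeff k r d u * gadgetWeight k r u = if d = 0 then 1 else 0 := by
  have hdiag : gadgetCoeff k r d d ≠ 0 := by
    simp only [gadgetCoeff, Nat.choose_self, Nat.cast_one, one_mul, Nat.cast_ne_zero]
    exact (Nat.choose_pos (by omega)).ne'
  refine (sum_subset (range_subset_range.2 (by omega)) fun u _ hu => ?_).symm.trans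
    (sum_range_succ_mul_lowerTriangularSolve _ _ hdiag)
  rw [gadgetCoeff, Nat.choose_eq_zero_of_lt (by simpa using hu)]
  simp

theorem abs_gadgetWeight_le {k r d : ℕ} (hkr : k ≤ r) (hd : d ≤ k) :
    |gadgetWeight k r d| ≤ 2 ^ d * d ! / (r - d).choose (k - d) :=
  abs_lowerTriangularSolve_gadgetCoeff_le hkr (fun d => by split_ifs <;> simp) hd

theorem stmt_9_general {V : Type*} [Fintype V] [DecidableEq V]
    (k r : ℕ) (hkr : k < r)
    (hV : Fintype.card V = k + r) (e : Finset V) (he : e.card = k) :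
    ∃ α : ℕ → ℝ,
      (∀ f : Finset V, f.card = k →
        ∑ K ∈ (univ.powersetCard r : Finset (Finset V)),
            (if f ⊆ K then α ((e ∩ K).card) else 0)
          = if f = e then 1 else 0) ∧
      ∀ i ≤ k, |α i| ≤ 2^(k-i) * ((k-i).factorial : ℝ) / ((r - k + i).choose i : ℝ) := by
  refine ⟨fun i => gadgetWeight k r (k - i), fun f hf => ?_, fun i hi => ?_⟩
  · have hmissing : ∀ K : Finset V, k - #(e ∩ K) = #(e \ K) := fun K => by
      rw [card_sdiff, inter_comm, he]
    have hfe : f = e ↔ #(e \ f) = 0 := by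
      rw [Finset.card_eq_zero, sdiff_eq_empty_iff_subset]
      exact ⟨fun h => h ▸ subset_rfl, fun h => (eq_of_subset_of_card_le h (by omega)).symm⟩
    simp only [hmissing]
    rw [sum_powersetCard_filter_superset_card_sdiff hV hf]
    simp only [nsmul_eq_mul, Nat.cast_mul, hfe]
    exact sum_range_gadgetCoeff_mul_gadgetWeight hkr.le (he ▸ card_le_card sdiff_subset)
  · have h := abs_gadgetWeight_le hkr.le (Nat.sub_le k i)
    rwa [show r - (k - i) = r - k + i by omega, show k - (k - i) = i by omega] at h

/-- Proposition 3.3: existence of a basic edge-gadget inside a complete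
k-uniform hypergraph on k+r vertices. -/
theorem stmt_9 {V : Type*} [Fintype V] [DecidableEq V]
    (k r : ℕ) (hk : 2 ≤ k) (hkr : k < r)
    (hV : Fintype.card V = k + r) (e : Finset V) (he : e.card = k) :
    ∃ α : ℕ → ℝ,
      (∀ f : Finset V, f.card = k →
        ∑ K ∈ (univ.powersetCard r : Finset (Finset V)),
            (if f ⊆ K then α ((e ∩ K).card) else 0)
          = if f = e then 1 else 0) ∧
      ∀ i ≤ k, |α i| ≤ 2^(k-i) * ((k-i).factorial : ℝ) / ((r - k + i).choose i : ℝ) :=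
  stmt_9_general k r hkr hV e he
end

section
/- Let $0 < \delta < 1$ and let $G$ be a graph on $n$ vertices with $\delta(G) \ge (1-\delta)n$ such that the set $X = \{x \in V(G) : d(x) \ge (1-\delta)n + r - 1\}$ induces a $K_r$-free graph. Then $|X| \le \delta(r-1)n$. -/
open Finset
open scoped Classical

lemma aux_induce_clique {V : Type*} (G : SimpleGraph V) (Xs : Set V) (r : ℕ)
    (hfree : (G.induce Xs).CliqueFree r) (s : Finset V) (hsub : ↑s ⊆ Xs)
    (hcl : G.IsNClique r s) : False := by
  classical
  let f : {x // x ∈ s} ↪ Xs :=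
    ⟨fun x => ⟨x.1, hsub x.2⟩, fun a b h => Subtype.ext (congrArg Subtype.val h :)⟩
  let t : Finset Xs := s.attach.map f
  refine hfree t ⟨?_, ?_⟩
  · intro a ha b hb hab
    simp only [t, mem_coe, mem_map, mem_attach, true_and] at ha hb
    obtain ⟨⟨a', ha'⟩, rfl⟩ := ha
    obtain ⟨⟨b', hb'⟩, rfl⟩ := hb
    have hne : a' ≠ b' := fun h => hab (by simp [f, h])
    exact hcl.1 ha' hb' hne
  · simp [t, hcl.2]

/-- The set X of vertices of high degree is small when G[X] is K_r-free. -/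
theorem stmt_11 {V : Type*} [Fintype V] (r : ℕ) (δ : ℝ) (hδ0 : 0 < δ) (hδ1 : δ < 1)
    (G : SimpleGraph V)
    (hmin : (1-δ) * (Fintype.card V : ℝ) ≤ (G.minDegree : ℝ))
    (hfree : (G.induce {x : V |
        (1-δ) * (Fintype.card V : ℝ) + (r:ℝ) - 1 ≤ (G.degree x : ℝ)}).CliqueFree r) :
    ((univ.filter (fun x : V =>
        (1-δ) * (Fintype.card V : ℝ) + (r:ℝ) - 1 ≤ (G.degree x : ℝ))).card : ℝ)
      ≤ δ * ((r:ℝ) - 1) * (Fintype.card V : ℝ) := by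
  classical
  set n : ℝ := (Fintype.card V : ℝ) with hn
  set X : Finset V := univ.filter (fun x : V => (1-δ) * n + (r:ℝ) - 1 ≤ (G.degree x : ℝ))
    with hXdef
  set Xs : Set V := {x : V | (1-δ) * n + (r:ℝ) - 1 ≤ (G.degree x : ℝ)} with hXs
  have hXmem : ∀ x : V, x ∈ X ↔ (1-δ) * n + (r:ℝ) - 1 ≤ (G.degree x : ℝ) := by
    intro x; simp [hXdef]
  -- r = 0 : CliqueFree 0 is absurd
  rcases Nat.eq_zero_or_pos r with hr0 | hrpos
  · subst hr0
    exact absurd (hfree ∅ (by simp)) (by simp)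
  by_contra hcon
  push_neg at hcon
  have hn0 : (0:ℝ) ≤ n := by positivity
  have hr1 : (1:ℝ) ≤ (r:ℝ) := by exact_mod_cast hrpos
  have hXpos : 0 < X.card := by
    have h0 : (0:ℝ) ≤ δ * ((r:ℝ)-1) * n := mul_nonneg (mul_nonneg hδ0.le (by linarith)) hn0
    by_contra h
    push_neg at h
    have hz : X.card = 0 := Nat.le_zero.mp h
    rw [hz] at hcon
    norm_num at hcon
    linarith
  obtain ⟨x0, hx0⟩ := card_pos.mp hXpos
  have hVpos : 0 < Fintype.card V := Fintype.card_pos_iff.mpr ⟨x0⟩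
  -- degree bound: deg x ≤ n - 1
  have hdegle : ∀ x : V, (G.degree x : ℝ) ≤ n - 1 := by
    intro x
    have h2 : G.degree x + 1 ≤ Fintype.card V := G.degree_lt_card_verts x
    have h3 : (G.degree x : ℝ) + 1 ≤ (Fintype.card V : ℝ) := by exact_mod_cast h2
    rw [hn]; linarith
  set c : ℝ := δ * n - (r:ℝ) + 1 with hc
  have hc1 : (1:ℝ) ≤ c := by
    have h1 := (hXmem x0).mp hx0
    have h2 := hdegle x0
    simp only [hc]; linarith
  -- key: for x ∈ X, T ⊆ X : (T.card : ℝ) - c ≤ (T ∩ N(x)).card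
  have key : ∀ x ∈ X, ∀ T : Finset V,
      (T.card : ℝ) - c ≤ ((T ∩ G.neighborFinset x).card : ℝ) := by
    intro x hx T
    have hsplit : T ⊆ (T ∩ G.neighborFinset x) ∪ (univ \ G.neighborFinset x) := by
      intro a ha
      by_cases h : a ∈ G.neighborFinset x
      · exact mem_union_left _ (mem_inter.mpr ⟨ha, h⟩)
      · exact mem_union_right _ (mem_sdiff.mpr ⟨mem_univ a, h⟩)
    have hcard : T.card ≤ (T ∩ G.neighborFinset x).card + (univ \ G.neighborFinset x).card :=
      le_trans (card_le_card hsplit) (card_union_le _ _)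
    have hsd : ((univ \ G.neighborFinset x).card : ℝ) = n - G.degree x := by
      have hNd : (G.neighborFinset x).card = G.degree x := G.card_neighborFinset_eq_degree x
      rw [card_sdiff_of_subset (subset_univ _), card_univ, hNd,
        Nat.cast_sub (G.degree_lt_card_verts x).le, hn]
    have hdeg := (hXmem x).mp hx
    have : ((univ \ G.neighborFinset x).card : ℝ) ≤ c := by
      rw [hsd, hc]; linarith
    have hcardR : (T.card : ℝ) ≤ ((T ∩ G.neighborFinset x).card : ℝ)
        + ((univ \ G.neighborFinset x).card : ℝ) := by exact_mod_cast hcard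
    linarith
  -- greedy construction
  have greedy : ∀ j : ℕ, j ≤ r →
      ∃ s T : Finset V, ↑s ⊆ Xs ∧ G.IsNClique j s ∧ T ⊆ X ∧
        (∀ u ∈ s, ∀ w ∈ T, G.Adj u w) ∧
        (X.card : ℝ) - j * c ≤ (T.card : ℝ) := by
    intro j
    induction j with
    | zero =>
      intro _
      refine ⟨∅, X, by simp, by simp, subset_rfl, by simp, by simp⟩
    | succ k ih =>
      intro hk
      obtain ⟨s, T, hsX, hscl, hTX, hadj, hcard⟩ := ih (Nat.le_of_succ_le hk)
      -- T is nonempty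
      have hkr : (k:ℝ) ≤ (r:ℝ) - 1 := by
        have : (k+1 : ℕ) ≤ r := hk
        have : ((k:ℝ)+1) ≤ (r:ℝ) := by exact_mod_cast this
        linarith
      have hTpos : (0:ℝ) < (T.card : ℝ) := by
        have hcb : (r:ℝ) - 1 ≥ 0 := by linarith
        have h1 : (k:ℝ) * c ≤ ((r:ℝ)-1) * c := by nlinarith
        have h2 : ((r:ℝ)-1) * c ≤ δ * ((r:ℝ)-1) * n := by nlinarith
        linarith
      have hTne : T.Nonempty := card_pos.mp (by exact_mod_cast hTpos)
      obtain ⟨v, hvT⟩ := hTne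
      have hvX : v ∈ X := hTX hvT
      refine ⟨insert v s, T ∩ G.neighborFinset v, ?_, ?_, ?_, ?_, ?_⟩
      · intro a ha
        have ha' : a ∈ insert v s := by exact_mod_cast ha
        rcases Finset.mem_insert.mp ha' with h | h
        · subst h
          simpa [hXs] using (hXmem a).mp hvX
        · exact hsX h
      · refine hscl.insert ?_
        intro b hb
        exact (hadj b hb v hvT).symm
      · exact (inter_subset_left).trans hTX
      · intro u hu w hw
        rcases Finset.mem_insert.mp hu with h | hu'
        · subst h
          exact (SimpleGraph.mem_neighborFinset _ _ _).mp (mem_inter.mp hw).2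
        · exact hadj u hu' w ((mem_inter.mp hw).1)
      · have := key v hvX T
        push_cast
        linarith
  obtain ⟨s, T, hsX, hscl, _, _, _⟩ := greedy r le_rfl
  exact aux_induce_clique G Xs r hfree s hsX hscl
end
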